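/- arXiv:math/0304001 — 3 statements merged into one kernel-verified Lean document; each statement's English description precedes it below -/
import Mathlib

section
/- Let X be a right H-module and let f be a linear functional on H⊗X such that η▷f = ε(η)f for all η ∈ H, where (η▷f)(ω ⊗ x) = f(S^{-1}(η_(0)) ω η_(1) ⊗ x◁η_(2)). Then f(ω ⊗ x) = f(ω_(0) ⊗ x◁ω_(1)) for all ω ∈ H and x ∈ X. -/
open scoped TensorProduct

noncomputable section

/-- A Hopf `ℂ`-algebra with invertible antipode, together with a chosen finite
(Sweedler) representation of the comultiplication: `Δ ω = ∑_{p ∈ Δl ω} p.1 ⊗ p.2`. -/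
structure HopfData (H : Type) [Ring H] [HopfAlgebra ℂ H] where
  /-- the inverse of the antipode -/
  Sinv : H →ₗ[ℂ] H
  Sinv_antipode : ∀ ω : H, Sinv (HopfAlgebra.antipode (R := ℂ) ω) = ω
  antipode_Sinv : ∀ ω : H, HopfAlgebra.antipode (R := ℂ) (Sinv ω) = ω
  /-- a chosen list representation of the comultiplication -/
  Δl : H → List (H × H)
  Δl_repr : ∀ ω : H,
    (Coalgebra.comul (R := ℂ) ω : H ⊗[ℂ] H) = ((Δl ω).map fun p => p.1 ⊗ₜ[ℂ] p.2).sum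

variable {H : Type} [Ring H] [HopfAlgebra ℂ H]

/-- the counit, as a `ℂ`-valued function -/
def epsi (ω : H) : ℂ := Coalgebra.counit (R := ℂ) ω

/-- Iterated Sweedler decomposition: `sw n ω` represents
`Δⁿ ω = ∑_v v 0 ⊗ ⋯ ⊗ v n`, where `Δⁿ = (ι ⊗ Δ) Δ^{n-1}`. -/
def HopfData.sw (D : HopfData H) : (n : ℕ) → H → List (Fin (n + 1) → H)
  | 0, ω => [fun _ => ω]
  | n + 1, ω =>
    (D.sw n ω).flatMap fun v =>
      (D.Δl (v (Fin.last n))).map fun p =>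
        Fin.snoc (Function.update v (Fin.last n) p.1) p.2

/-- A right `H`-module structure (over `ℂ`), recorded as the antihomomorphism
`act : H → End(B)`, so `act ω b` stands for `b ◁ ω`. -/
structure RAct (H : Type) [Ring H] [HopfAlgebra ℂ H] (B : Type) [AddCommGroup B]
    [Module ℂ B] where
  act : H →ₗ[ℂ] B →ₗ[ℂ] B
  act_one : act 1 = LinearMap.id
  act_mul : ∀ ω η : H, act (ω * η) = (act η) ∘ₗ (act ω)

/-- A unital right `H`-module algebra structure on `B`:
`(b₁ b₂) ◁ ω = ∑ (b₁ ◁ ω₍₀₎)(b₂ ◁ ω₍₁₎)` and `1 ◁ ω = ε(ω) 1`. -/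
structure MAlg (D : HopfData H) (B : Type) [Ring B] [Algebra ℂ B] extends RAct H B where
  act_mul_mul : ∀ (ω : H) (b₁ b₂ : B),
    act ω (b₁ * b₂) = ((D.Δl ω).map fun p => act p.1 b₁ * act p.2 b₂).sum
  act_algOne : ∀ ω : H, act ω (1 : B) = epsi ω • (1 : B)


/-- the action as a plain function: `fn ω b = b ◁ ω` -/
def RAct.fn {H : Type} [Ring H] [HopfAlgebra ℂ H] {B : Type} [AddCommGroup B] [Module ℂ B]
    (A : RAct H B) : H → B → B := fun ω x => A.act ω x

/-- the action of a module algebra as a plain function -/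
def MAlg.fn {H : Type} [Ring H] [HopfAlgebra ℂ H] {B : Type} [Ring B] [Algebra ℂ B]
    {D : HopfData H} (A : MAlg D B) : H → B → B := A.toRAct.fn


/-! Write `f(ω ⊗ x) = ∑ ε(ω₍₁₎) f(ω₍₀₎ ⊗ x)` and apply invariance with `η = ω₍₁₎` to each term:
by coassociativity this gives `∑ f(S⁻¹(ω₍₁₎) ω₍₀₎ ω₍₂₎ ⊗ x ◁ ω₍₃₎)`, and the factor
`∑ S⁻¹(ω₍₁₎) ω₍₀₎` collapses to the counit because `S` turns it into `∑ S(ω₍₀₎) ω₍₁₎ = ε(ω)`. -/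

open TensorProduct HopfAlgebra
open Coalgebra (comul counit)

theorem lTensor_lTensor_comul_comp_comul_apply {R A : Type*} [CommSemiring R]
    [AddCommMonoid A] [Module R A] [Coalgebra R A] (a : A) :
    (comul.lTensor A ∘ₗ comul).lTensor A (comul (R := R) a) =
      TensorProduct.assoc R A A (A ⊗[R] A) (map (comul (R := R)) comul (comul a)) := by
  have h : (comul.lTensor A ∘ₗ comul).lTensor A ∘ₗ comul (R := R) (A := A) =
      (TensorProduct.assoc R A A (A ⊗[R] A)).toLinearMap ∘ₗ map comul comul ∘ₗ comul := by
    simp only [coassoc_simps]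
  exact LinearMap.congr_fun h a

namespace HopfAlgebra

variable {R A : Type*} [CommSemiring R] [Semiring A] [HopfAlgebra R A]

/-- `∑ τ(a₍₁₎) a₍₀₎ = ε(a) 1` -/
theorem mul'_rTensor_comm_comul_of_inverse {τ : A →ₗ[R] A}
    (hl : Function.LeftInverse τ (antipode R)) (hr : Function.RightInverse τ (antipode R))
    (a : A) :
    LinearMap.mul' R A (τ.rTensor A (TensorProduct.comm R A A (comul a))) =
      algebraMap R A (counit a) := by
  have antipode_mul'_rTensor_comm (z : A ⊗[R] A) :
      antipode R (LinearMap.mul' R A (τ.rTensor A (TensorProduct.comm R A A z))) =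
        LinearMap.mul' R A ((antipode R).rTensor A z) := by
    induction z using TensorProduct.induction_on with
    | zero => simp
    | tmul b c => simp [antipode_mul_antidistrib, hr c]
    | add u v hu hv => simp only [map_add, hu, hv]
  apply hl.injective
  rw [antipode_mul'_rTensor_comm, mul_antipode_rTensor_comul_apply,
    Algebra.algebraMap_eq_smul_one, map_smul, antipode_one]

def twistedMul (τ : A →ₗ[R] A) : (A ⊗[R] A) ⊗[R] (A ⊗[R] A) →ₗ[R] A ⊗[R] A :=
  (LinearMap.mul' R A).rTensor A ∘ₗ (TensorProduct.assoc R A A A).symm.toLinearMap ∘ₗ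
    (LinearMap.mul' R A ∘ₗ τ.rTensor A ∘ₗ (TensorProduct.comm R A A).toLinearMap).rTensor _

theorem twistedMul_tmul (τ : A →ₗ[R] A) (x y : A ⊗[R] A) :
    twistedMul τ (x ⊗ₜ y) =
      (LinearMap.mulLeft R (LinearMap.mul' R A (τ.rTensor A (TensorProduct.comm R A A x)))).rTensor
        A y := by
  induction y using TensorProduct.induction_on with
  | zero => simp
  | tmul c d => simp [twistedMul]
  | add u v hu hv => simp only [tmul_add, map_add, hu, hv]

@[simp]
theorem twistedMul_tmul_tmul (τ : A →ₗ[R] A) (a b c d : A) :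
    twistedMul τ ((a ⊗ₜ b) ⊗ₜ (c ⊗ₜ d)) = (τ b * a * c) ⊗ₜ[R] d := by
  simp [twistedMul_tmul, mul_assoc]

/-- `∑ τ(a₍₁₎) a₍₀₎ a₍₂₎ ⊗ a₍₃₎ = a₍₀₎ ⊗ a₍₁₎` -/
theorem twistedMul_map_comul_comul_comul {τ : A →ₗ[R] A}
    (hl : Function.LeftInverse τ (antipode R)) (hr : Function.RightInverse τ (antipode R))
    (a : A) :
    twistedMul τ (map comul comul (comul a)) = comul a := by
  have mulLeft_algebraMap (r : R) : LinearMap.mulLeft R (algebraMap R A r) = r • LinearMap.id :=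
    LinearMap.ext fun b => (Algebra.smul_def r b).symm
  have h : twistedMul τ ∘ₗ map comul comul =
      comul ∘ₗ (TensorProduct.lid R A).toLinearMap ∘ₗ counit.rTensor A := by
    refine TensorProduct.ext' fun b c => ?_
    simp [twistedMul_tmul, mul'_rTensor_comm_comul_of_inverse hl hr, mulLeft_algebraMap]
  simpa using LinearMap.congr_fun h (comul a)

end HopfAlgebra

namespace HopfData

variable (D : HopfData H) {M : Type} [AddCommGroup M] [Module ℂ M]

theorem sum_map_Δl (Φ : H ⊗[ℂ] H →ₗ[ℂ] M) (ω : H) :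
    ((D.Δl ω).map fun p => Φ (p.1 ⊗ₜ p.2)).sum = Φ (comul ω) := by
  rw [D.Δl_repr, map_list_sum, List.map_map]
  rfl

theorem sum_map_Δl_counit_smul (ω : H) : ((D.Δl ω).map fun p => epsi p.2 • p.1).sum = ω := by
  simpa [epsi] using D.sum_map_Δl ((TensorProduct.rid ℂ H).toLinearMap ∘ₗ counit.lTensor H) ω

theorem map_sw_two (η : H) :
    (D.sw 2 η).map (fun v => (v 0, v 1, v 2)) =
      (D.Δl η).flatMap fun p => (D.Δl p.2).map fun q => (p.1, q.1, q.2) := by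
  simp only [HopfData.sw, List.flatMap_singleton, List.flatMap_map, List.map_flatMap, List.map_map]
  rfl

theorem sum_map_sw_two (Φ : H ⊗[ℂ] (H ⊗[ℂ] H) →ₗ[ℂ] M) (η : H) :
    ((D.sw 2 η).map fun v => Φ (v 0 ⊗ₜ (v 1 ⊗ₜ v 2))).sum =
      Φ ((comul.lTensor H ∘ₗ comul) η) := by
  have h := congrArg (List.map fun t => Φ (t.1 ⊗ₜ (t.2.1 ⊗ₜ t.2.2))) (D.map_sw_two η)
  simp only [List.map_map, Function.comp_def, List.map_flatMap] at h
  rw [h, List.flatMap_def, List.sum_flatten, List.map_map]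
  refine Eq.trans ?_ (D.sum_map_Δl (Φ ∘ₗ comul.lTensor H) η)
  refine congrArg List.sum (List.map_congr_left fun p _ => ?_)
  simpa using D.sum_map_Δl (Φ ∘ₗ TensorProduct.mk ℂ H (H ⊗[ℂ] H) p.1) p.2

end HopfData

/-- if `f` is an `H`-invariant linear functional on `H ⊗ X` (for a right
`H`-module `X`), then `f(ω ⊗ x) = f(ω₍₀₎ ⊗ x ◁ ω₍₁₎)`. -/
theorem invariant_functional_absorbs_coaction
    {H : Type} [Ring H] [HopfAlgebra ℂ H] (D : HopfData H)
    {X : Type} [AddCommGroup X] [Module ℂ X] (A : RAct H X)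
    (f : H →ₗ[ℂ] X →ₗ[ℂ] ℂ)
    (hf : ∀ (η ω : H) (x : X),
      ((D.sw 2 η).map fun v => f (D.Sinv (v 0) * ω * v 1) (A.act (v 2) x)).sum
        = epsi η * f ω x) :
    ∀ (ω : H) (x : X),
      ((D.Δl ω).map fun p => f p.1 (A.act p.2 x)).sum = f ω x := by
  intro ω x
  let G : H ⊗[ℂ] H →ₗ[ℂ] ℂ := TensorProduct.lift (f.compl₂ (A.act.flip x))
  let W := G ∘ₗ twistedMul D.Sinv ∘ₗ (TensorProduct.assoc ℂ H H (H ⊗[ℂ] H)).symm.toLinearMap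
  have hW (a b c d : H) : W (a ⊗ₜ (b ⊗ₜ (c ⊗ₜ d))) = f (D.Sinv b * a * c) (A.act d x) := by
    simp [W, G]
  calc ((D.Δl ω).map fun p => f p.1 (A.act p.2 x)).sum
      = G (comul ω) := D.sum_map_Δl G ω
    _ = G (twistedMul D.Sinv (map comul comul (comul ω))) := by
      rw [twistedMul_map_comul_comul_comul D.Sinv_antipode D.antipode_Sinv]
    _ = W ((comul.lTensor H ∘ₗ comul).lTensor H (comul ω)) := by
      simp [W, lTensor_lTensor_comul_comp_comul_apply]
    _ = ((D.Δl ω).map fun p =>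
          ((D.sw 2 p.2).map fun v => f (D.Sinv (v 0) * p.1 * v 1) (A.act (v 2) x)).sum).sum := by
      refine (D.sum_map_Δl (W ∘ₗ (comul.lTensor H ∘ₗ comul).lTensor H) ω).symm.trans ?_
      refine congrArg List.sum (List.map_congr_left fun p _ => ?_)
      simpa [hW] using (D.sum_map_sw_two (W ∘ₗ TensorProduct.mk ℂ H _ p.1) p.2).symm
    _ = ((D.Δl ω).map fun p => epsi p.2 * f p.1 x).sum := by simp only [hf]
    _ = f.flip x ((D.Δl ω).map fun p => epsi p.2 • p.1).sum := by
      simp [map_list_sum, List.map_map, Function.comp_def]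
    _ = f ω x := by rw [D.sum_map_Δl_counit_smul]; rfl
end
end

section
/- Let B^H = {b ∈ B : b◁ω = ε(ω)b for all ω} be the subalgebra of H-invariant elements of B. For each fixed ω ∈ H, the maps ω_* : C^n_H(B) → C^n(B^H) defined by (ω_* f)(b₀ ⊗ ⋯ ⊗ bₙ) = f(ω ⊗ b₀ ⊗ ⋯ ⊗ bₙ) form a morphism of cocyclic objects from the equivariant cocyclic object of B to the standard cocyclic object of the algebra B^H (i.e. ω_* commutes with the cyclic operators, cofaces and codegeneracies). -/
open scoped TensorProduct

noncomputable section

variable {H : Type} [Ring H] [HopfAlgebra ℂ H]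

/-- The space of `ℂ`-valued functions of one `H`-variable and `n+1` `B`-variables;
(multi)linear such functions correspond to linear functionals on `H ⊗ B^{⊗(n+1)}`. -/
abbrev Raw (H B : Type) (n : ℕ) := H → (Fin (n + 1) → B) → ℂ

section Raw

variable {H : Type} [Ring H] [HopfAlgebra ℂ H] {B : Type} [Ring B] [Algebra ℂ B] {n : ℕ}

/-- `f` is linear in the `H`-variable and in each `B`-variable separately, i.e. `f`
is (the restriction of) a linear functional on `H ⊗ B^{⊗(n+1)}`. -/
def IsML (f : Raw H B n) : Prop :=
  (∀ ω η b, f (ω + η) b = f ω b + f η b) ∧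
  (∀ (c : ℂ) ω b, f (c • ω) b = c * f ω b) ∧
  (∀ ω b (i : Fin (n + 1)) (x y : B),
    f ω (Function.update b i (x + y)) =
      f ω (Function.update b i x) + f ω (Function.update b i y)) ∧
  (∀ ω b (i : Fin (n + 1)) (c : ℂ) (x : B),
    f ω (Function.update b i (c • x)) = c * f ω (Function.update b i x))

/-- `H`-invariance of the functional `f` on `H ⊗ B^{⊗(n+1)}`:
`(ω ▷ f)(η ⊗ b₀ ⊗ ⋯ ⊗ bₙ) = f(S⁻¹(ω₍₀₎) η ω₍₁₎ ⊗ b₀ ◁ ω₍₂₎ ⊗ ⋯ ⊗ bₙ ◁ ω₍ₙ₊₂₎)`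
equals `ε(ω) f(η ⊗ b₀ ⊗ ⋯ ⊗ bₙ)`. -/
def IsInv (D : HopfData H) (act : H → B → B) (f : Raw H B n) : Prop :=
  ∀ (ω η : H) (b : Fin (n + 1) → B),
    ((D.sw (n + 2) ω).map fun v =>
        f (D.Sinv (v 0) * η * v 1) fun i => act (v i.succ.succ) (b i)).sum
      = epsi ω * f η b

/-- membership in the equivariant cochain space `C^n_H(B)` -/
def InC (D : HopfData H) (act : H → B → B) (f : Raw H B n) : Prop :=
  IsML f ∧ IsInv D act f

/-- the cyclic operator
`(tₙ f)(ω ⊗ b₀ ⊗ ⋯ ⊗ bₙ) = f(ω₍₀₎ ⊗ bₙ ◁ ω₍₁₎ ⊗ b₀ ⊗ ⋯ ⊗ b_{n-1})` -/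
def tRaw (D : HopfData H) (act : H → B → B) (f : Raw H B n) : Raw H B n :=
  fun ω b =>
    ((D.Δl ω).map fun p =>
      f p.1 (Fin.cons (act p.2 (b (Fin.last n))) fun i : Fin n => b i.castSucc)).sum

/-- merging the `i`-th and `(i+1)`-st entries of a `(n+2)`-tuple by multiplication -/
def contract (i : Fin (n + 1)) (b : Fin (n + 2) → B) : Fin (n + 1) → B :=
  fun j =>
    if (j : ℕ) < (i : ℕ) then b j.castSucc
    else if (j : ℕ) = (i : ℕ) then b j.castSucc * b j.succ
    else b j.succ

/-- the coface operators `dⁿᵢ : C^{n} → C^{n+1}` (`i < n+1` multiplies adjacent entries;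
the last one is `d_{n+1} = t ∘ d₀`) -/
def dRaw (D : HopfData H) (act : H → B → B) (i : Fin (n + 2)) (f : Raw H B n) :
    Raw H B (n + 1) :=
  if h : (i : ℕ) < n + 1 then fun ω b => f ω (contract ⟨i, h⟩ b)
  else tRaw D act fun ω b => f ω (contract 0 b)

/-- the codegeneracy operators `sⁿᵢ : C^{n+1} → C^n`, inserting a `1` after the `i`-th entry -/
def sRaw (i : Fin (n + 1)) (f : Raw H B (n + 1)) : Raw H B n :=
  fun ω b => f ω (Fin.insertNth i.succ 1 b)

/-- the Hochschild coboundary `b = ∑ (-1)ⁱ dᵢ` -/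
def bRaw (D : HopfData H) (act : H → B → B) (f : Raw H B n) : Raw H B (n + 1) :=
  fun ω b => ∑ i : Fin (n + 2), ((-1 : ℂ) ^ (i : ℕ)) * dRaw D act i f ω b

/-- cyclicity: `λ f = (-1)ⁿ tₙ f = f` -/
def IsCyc (D : HopfData H) (act : H → B → B) (f : Raw H B n) : Prop :=
  ∀ ω b, ((-1 : ℂ) ^ n) * tRaw D act f ω b = f ω b

/-- an `n`-cocycle of the cyclic complex `(Ker(1-λ), b)` computing `HC^n_H(B)` -/
def IsCocycle (D : HopfData H) (act : H → B → B) (f : Raw H B n) : Prop :=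
  InC D act f ∧ IsCyc D act f ∧ ∀ ω b, bRaw D act f ω b = 0

end Raw

/-- merging the top and bottom entries: the standard last coface
`(dₙ g)(b₀ ⊗ ⋯ ⊗ bₙ) = g(bₙ b₀ ⊗ b₁ ⊗ ⋯ ⊗ b_{n-1})`, together with the inner ones -/
def stdCon {B : Type} [Ring B] {n : ℕ} (i : Fin (n + 2)) (b : Fin (n + 2) → B) :
    Fin (n + 1) → B :=
  if h : (i : ℕ) < n + 1 then contract ⟨i, h⟩ b
  else Fin.cons (b (Fin.last (n + 1)) * b 0) fun j : Fin n => b j.succ.castSucc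


/-!
An invariant entry `x` turns the Sweedler sum `∑ f(ω₍₀₎ ⊗ x ◁ ω₍₁₎ ⊗ ⋯)` into
`∑ ε(ω₍₁₎) f(ω₍₀₎ ⊗ x ⊗ ⋯)`, which is `f(ω ⊗ x ⊗ ⋯)` by the counit axiom and linearity
of `f` in its `H`-variable. This computes the cyclic operator and the last coface; the
other operators agree with the standard ones on the nose.
-/

theorem contract_zero_cons {B : Type} [Ring B] {n : ℕ} (x : B) (t : Fin (n + 1) → B) :
    contract 0 (Fin.cons x t) = Fin.cons (x * t 0) fun j : Fin n => t j.succ := by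
  funext j
  cases j using Fin.cases <;> simp [contract]

section EvaluationMorphism

variable {H : Type} [Ring H] [HopfAlgebra ℂ H] {B : Type} [Ring B] [Algebra ℂ B] {n : ℕ}

theorem HopfData.sum_counit_smul (D : HopfData H) (ω : H) :
    ((D.Δl ω).map fun p => epsi p.2 • p.1).sum = ω := by
  have h := congrArg (TensorProduct.rid ℂ H).toLinearMap
    (Coalgebra.lTensor_counit_comul (R := ℂ) ω)
  rw [D.Δl_repr ω, map_list_sum, map_list_sum, List.map_map, List.map_map] at h
  simpa [Function.comp_def, epsi, TensorProduct.rid_tmul] using h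

theorem HopfData.sum_map_act_of_invariant (D : HopfData H) {act : H → B → B} {x : B}
    (hx : ∀ ω, act ω x = epsi ω • x) (F : H → B → ℂ) (hF : IsLinearMap ℂ (F · x))
    (hF_smul : ∀ ω (c : ℂ), F ω (c • x) = c * F ω x) (ω : H) :
    ((D.Δl ω).map fun p => F p.1 (act p.2 x)).sum = F ω x := by
  let L : H →ₗ[ℂ] ℂ := IsLinearMap.mk' _ hF
  calc ((D.Δl ω).map fun p => F p.1 (act p.2 x)).sum
      = ((D.Δl ω).map fun p => L (epsi p.2 • p.1)).sum := by
        simp only [hx, hF_smul, map_smul, smul_eq_mul]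
        rfl
    _ = L ω := by
        conv_rhs => rw [← D.sum_counit_smul ω, map_list_sum, List.map_map]
        rfl

theorem IsML.isLinearMap_apply {f : Raw H B n} (hf : IsML f) (b : Fin (n + 1) → B) :
    IsLinearMap ℂ (f · b) :=
  ⟨fun ω η => hf.1 ω η b, fun c ω => hf.2.1 c ω b⟩

theorem IsML.apply_cons_smul {f : Raw H B n} (hf : IsML f) (ω : H) (c : ℂ) (x : B)
    (t : Fin n → B) :
    f ω (Fin.cons (c • x) t) = c * f ω (Fin.cons x t) := by
  simpa only [Fin.update_cons_zero] using hf.2.2.2 ω (Fin.cons x t) 0 c x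

theorem tRaw_apply_of_last_invariant (D : HopfData H) {act : H → B → B} {f : Raw H B n}
    (hf : IsML f) {b : Fin (n + 1) → B}
    (hb : ∀ ω, act ω (b (Fin.last n)) = epsi ω • b (Fin.last n)) (ω : H) :
    tRaw D act f ω b = f ω (Fin.cons (b (Fin.last n)) fun i : Fin n => b i.castSucc) :=
  D.sum_map_act_of_invariant hb (fun η x => f η (Fin.cons x fun i => b i.castSucc))
    (hf.isLinearMap_apply _) (fun η c => hf.apply_cons_smul η c _ _) ω

theorem dRaw_apply_of_last_invariant (D : HopfData H) {act : H → B → B} {f : Raw H B n}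
    (hf : IsML f) (i : Fin (n + 2)) {b : Fin (n + 2) → B}
    (hb : ∀ ω, act ω (b (Fin.last (n + 1))) = epsi ω • b (Fin.last (n + 1))) (ω : H) :
    dRaw D act i f ω b = f ω (stdCon i b) := by
  by_cases hi : (i : ℕ) < n + 1
  · simp only [dRaw, stdCon, dif_pos hi]
  · simp only [dRaw, stdCon, dif_neg hi, tRaw, contract_zero_cons]
    exact D.sum_map_act_of_invariant hb
      (fun η x => f η (Fin.cons (x * b 0) fun j : Fin n => b j.succ.castSucc))
      (hf.isLinearMap_apply _) (fun η c => by rw [smul_mul_assoc, hf.apply_cons_smul]) ω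

end EvaluationMorphism

/-- for each fixed `ω ∈ H`, the maps
`(ω_* f)(b₀ ⊗ ⋯ ⊗ bₙ) = f(ω ⊗ b₀ ⊗ ⋯ ⊗ bₙ)` constitute a morphism of cocyclic
objects from the equivariant cocyclic object of `B` to the standard cocyclic object
of the invariant subalgebra `B^H`: on tuples of `H`-invariant elements of `B`, the
equivariant operators `tₙ`, `dⁿᵢ`, `sⁿᵢ` are computed by the standard (Connes)
cyclic operator, cofaces and codegeneracies. -/
theorem evaluation_is_cocyclic_morphism
    {H : Type} [Ring H] [HopfAlgebra ℂ H] (D : HopfData H)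
    {B : Type} [Ring B] [Algebra ℂ B] (A : MAlg D B) :
    (∀ (n : ℕ) (f : Raw H B n), InC D A.fn f →
      ∀ (ω : H) (b : Fin (n + 1) → B), (∀ i ω', A.fn ω' (b i) = epsi ω' • b i) →
        tRaw D A.fn f ω b =
          f ω (Fin.cons (b (Fin.last n)) fun i : Fin n => b i.castSucc)) ∧
    (∀ (n : ℕ) (f : Raw H B n), InC D A.fn f →
      ∀ (i : Fin (n + 2)) (ω : H) (b : Fin (n + 2) → B),
        (∀ j ω', A.fn ω' (b j) = epsi ω' • b j) →
          dRaw D A.fn i f ω b = f ω (stdCon i b)) ∧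
    (∀ (n : ℕ) (f : Raw H B (n + 1)), InC D A.fn f →
      ∀ (i : Fin (n + 1)) (ω : H) (b : Fin (n + 1) → B),
        (∀ j ω', A.fn ω' (b j) = epsi ω' • b j) →
          sRaw i f ω b = f ω (Fin.insertNth i.succ 1 b)) :=
  ⟨fun _ _ hf ω _ hb => tRaw_apply_of_last_invariant D hf.1 (hb _) ω,
    fun _ _ hf i ω _ hb => dRaw_apply_of_last_invariant D hf.1 i (hb _) ω,
    fun _ _ _ _ _ _ _ => rfl⟩

end
end

section
/- Let A be an algebra over ℂ and τ a trace on A, i.e. a linear functional with τ(xy) = τ(yx) for all x, y ∈ A. Then for any two idempotents p, p' ∈ A and any n ∈ ℕ, τ((p − p')^{2n+1}) = τ(p − p'). -/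
open scoped TensorProduct

noncomputable section

/-- if `τ` is a trace on a `ℂ`-algebra `A`, then for any two idempotents
`p, p'` and any `n`, `τ((p - p')^{2n+1}) = τ(p - p')`. -/
theorem trace_idempotent_difference_odd_power
    (A : Type) [Ring A] [Algebra ℂ A] (τ : A →ₗ[ℂ] ℂ)
    (htr : ∀ x y : A, τ (x * y) = τ (y * x))
    (p p' : A) (hp : p * p = p) (hp' : p' * p' = p') (n : ℕ) :
    τ ((p - p') ^ (2 * n + 1)) = τ (p - p') := by
  set u : A := p - p' with hu
  set v : A := p + p' - 1 with hv
  have hsq : u * u = 1 - v * v := by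
    have h : u * u + v * v = 2 • (p * p) + 2 • (p' * p') - 2 • p - 2 • p' + 1 := by
      rw [hu, hv]; noncomm_ring
    rw [hp, hp'] at h
    have h2 : u * u + v * v = 1 := by rw [h]; abel
    exact eq_sub_of_add_eq h2
  have hanti : v * u = -(u * v) := by
    have h : v * u + u * v = 2 • (p * p) - 2 • (p' * p') - 2 • p + 2 • p' := by
      rw [hu, hv]; noncomm_ring
    rw [hp, hp'] at h
    have h2 : v * u + u * v = 0 := by rw [h]; abel
    exact eq_neg_of_add_eq_zero_left h2
  have hvcomm : v * (u * u) = (u * u) * v := by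
    rw [← mul_assoc, hanti, neg_mul, mul_assoc, hanti]; simp [mul_assoc]
  have hstep : ∀ k : ℕ, u ^ (2 * (k + 1) + 1) = u ^ (2 * k + 1) * (u * u) := by
    intro k
    have h : 2 * (k + 1) + 1 = (2 * k + 1) + 1 + 1 := by ring
    rw [h, pow_succ, pow_succ, mul_assoc]
  -- v anticommutes with odd powers of u
  have hodd : ∀ m : ℕ, v * u ^ (2 * m + 1) = -(u ^ (2 * m + 1) * v) := by
    intro m
    induction m with
    | zero => simpa using hanti
    | succ k ih =>
      rw [hstep k, ← mul_assoc, ih, neg_mul, mul_assoc, hvcomm]; simp [mul_assoc]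
  induction n with
  | zero => simp
  | succ k ih =>
    have hzero : τ (u ^ (2 * k + 1) * (v * v)) = 0 := by
      have h1 : τ (u ^ (2 * k + 1) * v * v) = τ (v * (u ^ (2 * k + 1) * v)) :=
        htr _ _
      have h2 : v * (u ^ (2 * k + 1) * v) = -(u ^ (2 * k + 1) * v * v) := by
        rw [← mul_assoc, hodd k, neg_mul]
      rw [h2, map_neg] at h1
      have h3 : τ (u ^ (2 * k + 1) * v * v) = 0 := by
        have h4 : (2 : ℂ) * τ (u ^ (2 * k + 1) * v * v) = 0 := by
          linear_combination h1
        have := mul_eq_zero.mp h4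
        simpa using this
      rw [← mul_assoc]; exact h3
    rw [hstep k, hsq, mul_sub, mul_one, map_sub, hzero, sub_zero, ih]

end
end
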